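/- arXiv:2402.09969 — 2 statements merged into one kernel-verified Lean document; each statement's English description precedes it below -/
import Mathlib

section
/- Let G be a finitely generated infinite group containing a nilpotent subgroup of finite index (a virtually nilpotent group). Then FC(G) = {g ∈ G : the conjugacy class of g is finite} is infinite. Consequently, for every finite generating set S of G, every nonprincipal ultrafilter ω on ℕ, and every unbounded nondecreasing sequence (d_n) of positive real numbers, the kernel of the natural action of G on the asymptotic cone Cone_ω(G,d_n) is infinite. -/
open Filter

/-- If the centralizer of `g` has finite index, the conjugacy class of `g` is finite. -/
lemma conjClass_finite {G : Type*} [Group G] (g : G)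
    [hfi : (Subgroup.centralizer {g}).FiniteIndex] :
    Set.Finite {h : G | ∃ x : G, x⁻¹ * g * x = h} := by
  set C := Subgroup.centralizer ({g} : Set G) with hC
  have wd : ∀ a b : G, (QuotientGroup.leftRel C).r a b → a * g * a⁻¹ = b * g * b⁻¹ := by
    intro a b hab
    rw [QuotientGroup.leftRel_apply] at hab
    have hc : g * (a⁻¹ * b) = (a⁻¹ * b) * g :=
      Subgroup.mem_centralizer_iff.mp hab g (Set.mem_singleton g)
    have hb : b = a * (a⁻¹ * b) := by group
    symm
    calc b * g * b⁻¹ = a * ((a⁻¹ * b) * g) * (a⁻¹ * b)⁻¹ * a⁻¹ := by rw [hb]; group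
      _ = a * (g * (a⁻¹ * b)) * (a⁻¹ * b)⁻¹ * a⁻¹ := by rw [hc]
      _ = a * g * a⁻¹ := by group
  let F : G ⧸ C → G := Quotient.lift (fun x => x * g * x⁻¹) wd
  have : {h : G | ∃ x : G, x⁻¹ * g * x = h} ⊆ Set.range F := by
    rintro h ⟨x, rfl⟩
    exact ⟨QuotientGroup.mk x⁻¹, by show x⁻¹ * g * x⁻¹⁻¹ = x⁻¹ * g * x; rw [inv_inv]⟩
  exact (Set.finite_range F).subset this

/-- If a group is generated by a finite set and has finite center, then the center of the
quotient by the center is finite. -/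
lemma center_quotient_center_finite {G : Type*} [Group G] (S : Set G) (hSfin : S.Finite)
    (hScl : Subgroup.closure S = ⊤) (hZ : Finite (Subgroup.center G)) :
    Finite (Subgroup.center (G ⧸ Subgroup.center G)) := by
  classical
  set Z := Subgroup.center G with hZdef
  haveI : Finite ↥S := hSfin.to_subtype
  set A : Set G := {g : G | (QuotientGroup.mk g : G ⧸ Z) ∈ Subgroup.center (G ⧸ Z)} with hA
  have hcomm : ∀ g ∈ A, ∀ x : G, g⁻¹ * x⁻¹ * g * x ∈ Z := by
    intro g hg x
    have h1 : (QuotientGroup.mk (x * g) : G ⧸ Z) = QuotientGroup.mk (g * x) := by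
      have := (Subgroup.mem_center_iff.mp hg) (QuotientGroup.mk x)
      simpa [QuotientGroup.mk_mul] using this
    have h2 : (x * g)⁻¹ * (g * x) ∈ Z := QuotientGroup.eq.mp h1
    have h3 : (x * g)⁻¹ * (g * x) = g⁻¹ * x⁻¹ * g * x := by group
    rwa [h3] at h2
  set F : G → (↥S → ↥Z) := fun g s =>
    if h : g⁻¹ * (s : G)⁻¹ * g * (s : G) ∈ Z then ⟨_, h⟩ else 1 with hF
  have key : ∀ g ∈ A, ∀ h ∈ A, F g = F h → h * g⁻¹ ∈ Z := by
    intro g hg h hh hFgh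
    rw [Subgroup.mem_center_iff]
    have hcom : ∀ s ∈ S, s * (h * g⁻¹) = (h * g⁻¹) * s := by
      intro s hs
      have e1 : g⁻¹ * s⁻¹ * g * s = h⁻¹ * s⁻¹ * h * s := by
        have := congrFun hFgh ⟨s, hs⟩
        rw [hF] at this
        simp only [dif_pos (hcomm g hg s), dif_pos (hcomm h hh s)] at this
        exact congrArg Subtype.val this
      have e2 : (h * g⁻¹) * s⁻¹ = s⁻¹ * (h * g⁻¹) := by
        have e3 : h * (g⁻¹ * s⁻¹ * g * s) * s⁻¹ * g⁻¹ = (h * g⁻¹) * s⁻¹ := by group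
        have e4 : h * (h⁻¹ * s⁻¹ * h * s) * s⁻¹ * g⁻¹ = s⁻¹ * (h * g⁻¹) := by group
        rw [← e3, e1, e4]
      have := congrArg (fun t => s * t * s) e2
      simpa [mul_assoc] using this
    have hcen : Subgroup.closure S ≤ Subgroup.centralizer {h * g⁻¹} := by
      rw [Subgroup.closure_le]
      intro s hs
      exact Subgroup.mem_centralizer_iff.mpr (fun y hy => by
        rw [Set.mem_singleton_iff] at hy; rw [hy]; exact (hcom s hs).symm)
    intro x
    have hx : x ∈ Subgroup.centralizer {h * g⁻¹} := hcen (hScl ▸ Subgroup.mem_top x)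
    exact (Subgroup.mem_centralizer_iff.mp hx (h * g⁻¹) rfl).symm
  have hAfin : A.Finite := by
    have hcover : A ⊆ ⋃ k : (↥S → ↥Z), (A ∩ F ⁻¹' {k}) := by
      intro g hg
      exact Set.mem_iUnion.mpr ⟨F g, hg, rfl⟩
    refine Set.Finite.subset (Set.finite_iUnion fun k => ?_) hcover
    rcases Set.eq_empty_or_nonempty (A ∩ F ⁻¹' {k}) with h | ⟨g0, hg0A, hg0F⟩
    · simp [h]
    · have : (A ∩ F ⁻¹' {k}) ⊆ (fun z => z * g0) '' (Z : Set G) := by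
        rintro h ⟨hhA, hhF⟩
        have : h * g0⁻¹ ∈ Z := key g0 hg0A h hhA (by
          rw [show F g0 = k from hg0F, show F h = k from hhF])
        exact ⟨h * g0⁻¹, this, by group⟩
      exact Set.Finite.subset ((Set.finite_coe_iff.mp hZ).image _) this
  have hsurj : Function.Surjective
      (fun a : ↥A => (⟨QuotientGroup.mk a.1, a.2⟩ : Subgroup.center (G ⧸ Z))) := by
    rintro ⟨q, hq⟩
    obtain ⟨g, rfl⟩ := QuotientGroup.mk_surjective q
    exact ⟨⟨g, hq⟩, rfl⟩
  haveI := hAfin.to_subtype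
  exact Finite.of_surjective _ hsurj

/-- A finitely generated nilpotent group with finite center is finite. -/
lemma finite_of_fg_nilpotent_finite_center (G : Type*) [Group G] [Group.IsNilpotent G]
    (hfg : Group.FG G) (hZ : Finite (Subgroup.center G)) : Finite G := by
  revert hfg hZ
  refine nilpotent_center_quotient_ind
    (P := fun G _ _ => Group.FG G → Finite (Subgroup.center G) → Finite G) G
    (fun G _ _ _ _ => Finite.of_subsingleton) ?_
  intro G _ _ ih hfg hZ
  haveI := hfg
  obtain ⟨S, hScl⟩ := Group.fg_def.mp hfg
  have hZ2 := center_quotient_center_finite (↑S : Set G) S.finite_toSet hScl hZ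
  have hq : Finite (G ⧸ Subgroup.center G) := ih inferInstance hZ2
  exact Finite.of_equiv _ (Subgroup.groupEquivQuotientProdSubgroup (s := Subgroup.center G)).symm

/-- The word length of `g` with respect to a generating set `S`. -/
noncomputable def wordLength {G : Type*} [Group G] (S : Set G) (g : G) : ℕ :=
  sInf {n | ∃ l : List G, (∀ x ∈ l, x ∈ S ∨ x⁻¹ ∈ S) ∧ l.length = n ∧ l.prod = g}

/-- `g` lies in the kernel of the natural action of `G` on the asymptotic cone
`Cone_ω(G, d_n)`. -/
def inConeKernel {G : Type*} [Group G] (S : Set G) (ω : Ultrafilter ℕ) (d : ℕ → ℝ)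
    (g : G) : Prop :=
  ∀ x : ℕ → G, (∃ B : ℝ, ∀ n, (wordLength S (x n) : ℝ) / d n ≤ B) →
    Tendsto (fun n => (wordLength S ((x n)⁻¹ * g * x n) : ℝ) / d n) (ω : Filter ℕ) (nhds 0)

/-- If `G` is a finitely generated infinite virtually nilpotent group, then `FC(G)` is
infinite; consequently the kernel of the natural action of `G` on every asymptotic cone
is infinite. -/
theorem FC_infinite_of_virtually_nilpotent
    {G : Type*} [Group G] (hfg : Group.FG G) [Infinite G]
    (H : Subgroup G) (hnil : Group.IsNilpotent H) (hindex : H.FiniteIndex) :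
    Set.Infinite {g : G | Set.Finite {h : G | ∃ x : G, x⁻¹ * g * x = h}} ∧
    ∀ S : Set G, S.Finite → Subgroup.closure S = ⊤ →
      ∀ (ω : Ultrafilter ℕ), (∀ A ∈ ω, A.Infinite) →
        ∀ d : ℕ → ℝ, (∀ n, 0 < d n) → Monotone d → (∀ B : ℝ, ∃ n, B < d n) →
          Set.Infinite {g : G | inConeKernel S ω d g} := by
  haveI := hfg
  haveI := hnil
  haveI := hindex
  haveI hZinf : Infinite ↥(Subgroup.center ↥H) := by
    rw [← not_finite_iff_infinite]
    intro hfin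
    haveI : Group.FG ↥H := H.fg_of_index_ne_zero
    have hHfin : Finite ↥H := finite_of_fg_nilpotent_finite_center ↥H inferInstance hfin
    have : Finite G := Finite.of_equiv _ (Subgroup.groupEquivQuotientProdSubgroup (s := H)).symm
    exact not_finite G
  have hFCmem : ∀ z : ↥(Subgroup.center ↥H),
      (((z : ↥H) : G) ∈ {g : G | Set.Finite {h : G | ∃ x : G, x⁻¹ * g * x = h}}) := by
    intro z
    set g : G := ((z : ↥H) : G) with hg
    have hle : H ≤ Subgroup.centralizer {g} := by
      intro x hx
      refine Subgroup.mem_centralizer_iff.mpr fun y hy => ?_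
      rw [Set.mem_singleton_iff] at hy
      subst hy
      have := Subgroup.mem_center_iff.mp z.2 ⟨x, hx⟩
      have h2 := congrArg Subtype.val this
      push_cast at h2
      simpa [← hg] using h2.symm
    haveI : (Subgroup.centralizer {g}).FiniteIndex := Subgroup.finiteIndex_of_le hle
    exact conjClass_finite g
  have hinj : Function.Injective
      (fun z : ↥(Subgroup.center ↥H) => ((z : ↥H) : G)) := by
    intro a b hab
    exact Subtype.ext (Subtype.ext hab)
  have hFC : Set.Infinite {g : G | Set.Finite {h : G | ∃ x : G, x⁻¹ * g * x = h}} :=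
    Set.infinite_of_injective_forall_mem hinj hFCmem
  refine ⟨hFC, ?_⟩
  intro S hSfin hScl ω hω d hd hmono hunbdd
  refine hFC.mono fun g hgFC => ?_
  intro x _
  obtain ⟨N, hN⟩ : BddAbove ((wordLength S) '' {h : G | ∃ x : G, x⁻¹ * g * x = h}) :=
    (hgFC.image _).bddAbove
  have hle : ∀ n, (wordLength S ((x n)⁻¹ * g * x n) : ℝ) / d n ≤ (N : ℝ) / d n := by
    intro n
    have hmem : wordLength S ((x n)⁻¹ * g * x n) ≤ N :=
      hN (Set.mem_image_of_mem _ ⟨x n, rfl⟩)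
    have : (wordLength S ((x n)⁻¹ * g * x n) : ℝ) ≤ (N : ℝ) := by exact_mod_cast hmem
    gcongr
    exact (hd n).le
  have hωle : (ω : Filter ℕ) ≤ atTop := by
    rw [← Nat.cofinite_eq_atTop]
    intro s hs
    by_contra hns
    exact (hω sᶜ (Ultrafilter.compl_mem_iff_notMem.mpr hns)) (Filter.mem_cofinite.mp hs)
  have hdtop : Tendsto d atTop atTop :=
    tendsto_atTop_atTop_of_monotone hmono (fun b => (hunbdd b).imp fun n h => h.le)
  have hNd : Tendsto (fun n => (N : ℝ) / d n) (ω : Filter ℕ) (nhds 0) :=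
    (Filter.Tendsto.div_atTop tendsto_const_nhds hdtop).mono_left hωle
  exact tendsto_of_tendsto_of_tendsto_of_le_of_le tendsto_const_nhds hNd
    (fun n => div_nonneg (Nat.cast_nonneg _) (hd n).le) hle
end

section
/- Let S be any finite generating set of SL(3,ℤ), and let g = e₁₂ be the elementary matrix with ones on the diagonal, (1,2)-entry equal to 1, and all other entries 0. Then for every nonzero integer k, every nonprincipal ultrafilter ω on ℕ, and every unbounded nondecreasing sequence (d_n) of positive real numbers, the element g^k does not lie in the kernel of the natural action of SL(3,ℤ) on the asymptotic cone Cone_ω(SL(3,ℤ),d_n): there exists a sequence (x_n) in SL(3,ℤ) with (‖x_n‖_S/d_n) bounded such that ‖x_n⁻¹ g^k x_n‖_S / d_n does not converge to 0 along ω. In particular, this kernel is not a finite-index subgroup of SL(3,ℤ). -/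
open Filter

abbrev SL3 : Type := Matrix.SpecialLinearGroup (Fin 3) ℤ

/-- The elementary matrix `e₁₂` in `SL(3,ℤ)`. -/
def e12 : SL3 :=
  ⟨!![1, 1, 0; 0, 1, 0; 0, 0, 1], by first | (rw [Matrix.det_fin_three]; rfl) | decide | norm_num [Matrix.det_fin_three, Matrix.vecHead, Matrix.vecTail]⟩

/-!
Let `A` be the hyperbolic matrix `[[2,1],[1,1]]` (Arnold's cat map) in the upper-left block of
`SL(3,ℤ)`. The `(0,1)` entry of `A⁻ᵐ e₁₂ᵏ Aᵐ` is `k r²` with `r ≥ 2^(m-1)`, while an element of word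
length `ℓ` has entries of size at most `2^(Nℓ)` for a constant `N` depending on `S`. Hence
conjugating `e₁₂ᵏ` by `xₙ = A^(⌈dₙ⌉+1)`, whose word length is `O(dₙ)`, produces elements of word
length at least `dₙ / N`, which do not vanish in the cone. A finite-index subgroup contains some
`e₁₂ᵗ` with `t > 0`, so it cannot be the kernel.
-/

section WordLength

variable {G : Type*} [Group G] {S : Set G}

theorem wordLength_le_length {g : G} {l : List G} (hl : ∀ x ∈ l, x ∈ S ∨ x⁻¹ ∈ S)
    (hg : l.prod = g) : wordLength S g ≤ l.length :=
  Nat.sInf_le ⟨l, hl, rfl, hg⟩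

theorem exists_list_length_eq_wordLength (hS : Subgroup.closure S = ⊤) (g : G) :
    ∃ l : List G, (∀ x ∈ l, x ∈ S ∨ x⁻¹ ∈ S) ∧ l.length = wordLength S g ∧ l.prod = g := by
  have hg : g ∈ Submonoid.closure (S ∪ S⁻¹) := by
    rw [← Subgroup.closure_toSubmonoid, hS]; trivial
  obtain ⟨l, hl, hprod⟩ := Submonoid.exists_list_of_mem_closure hg
  exact Nat.sInf_mem (s := {n | ∃ l : List G, (∀ x ∈ l, x ∈ S ∨ x⁻¹ ∈ S) ∧ l.length = n ∧
    l.prod = g}) ⟨_, l, hl, rfl, hprod⟩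

theorem wordLength_mul_le (hS : Subgroup.closure S = ⊤) (g h : G) :
    wordLength S (g * h) ≤ wordLength S g + wordLength S h := by
  obtain ⟨lg, hlg, hlg_len, rfl⟩ := exists_list_length_eq_wordLength hS g
  obtain ⟨lh, hlh, hlh_len, rfl⟩ := exists_list_length_eq_wordLength hS h
  rw [← hlg_len, ← hlh_len, ← List.length_append]
  exact wordLength_le_length (fun x hx => (List.mem_append.mp hx).elim (hlg x) (hlh x))
    List.prod_append

theorem wordLength_pow_le (hS : Subgroup.closure S = ⊤) (g : G) (m : ℕ) :
    wordLength S (g ^ m) ≤ m * wordLength S g := by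
  induction m with
  | zero => simpa using wordLength_le_length (S := S) (l := []) (by simp) rfl
  | succ m ih =>
    calc wordLength S (g ^ (m + 1)) ≤ wordLength S (g ^ m) + wordLength S g := by
          rw [pow_succ]; exact wordLength_mul_le hS _ _
      _ ≤ (m + 1) * wordLength S g := by rw [add_mul, one_mul]; gcongr

theorem exists_norm_le_two_pow_mul_wordLength {R : Type*} [NormedRing R] [NormOneClass R]
    (ρ : G →* R) (hSfin : S.Finite) (hS : Subgroup.closure S = ⊤) :
    ∃ N : ℕ, ∀ g, ‖ρ g‖ ≤ 2 ^ (N * wordLength S g) := by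
  obtain ⟨C, hC⟩ := ((hSfin.union hSfin.inv).image fun s => ‖ρ s‖₊).bddAbove
  obtain ⟨N, hN⟩ := pow_unbounded_of_one_lt (C : ℝ) one_lt_two
  refine ⟨N, fun g => ?_⟩
  obtain ⟨l, hl, hlen, rfl⟩ := exists_list_length_eq_wordLength hS g
  have hletter : ∀ x ∈ l.map (fun s => ‖ρ s‖₊), x ≤ 2 ^ N := by
    simp only [List.mem_map]
    rintro _ ⟨s, hs, rfl⟩
    exact (hC ⟨s, hl s hs, rfl⟩).trans (by exact_mod_cast hN.le)
  have := (List.nnnorm_prod_le (l.map ρ)).trans (List.prod_le_pow_card _ _ (by simpa using hletter))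
  simp only [← map_list_prod, List.length_map, hlen, ← pow_mul] at this
  exact_mod_cast this

end WordLength

theorem Matrix.SpecialLinearGroup.exists_norm_apply_le_two_pow_mul_wordLength
    {n α : Type*} [Fintype n] [DecidableEq n] [Nonempty n] [NormedCommRing α] [NormOneClass α]
    {S : Set (Matrix.SpecialLinearGroup n α)} (hSfin : S.Finite) (hS : Subgroup.closure S = ⊤) :
    ∃ N : ℕ, ∀ (g : Matrix.SpecialLinearGroup n α) i j,
      ‖(g : Matrix n n α) i j‖ ≤ 2 ^ (N * wordLength S g) := by
  let _ := Matrix.linftyOpNormedRing (n := n) (α := α)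
  obtain ⟨N, hN⟩ := exists_norm_le_two_pow_mul_wordLength
    Matrix.SpecialLinearGroup.coeMonoidHom hSfin hS
  refine ⟨N, fun g i j => le_trans ?_ (hN g)⟩
  have hrow : ‖(g : Matrix n n α) i j‖₊ ≤ ∑ j', ‖(g : Matrix n n α) i j'‖₊ :=
    Finset.single_le_sum (f := fun j' => ‖(g : Matrix n n α) i j'‖₊) (fun _ _ => zero_le)
      (Finset.mem_univ j)
  have := hrow.trans (Finset.le_sup (f := fun i => ∑ j', ‖(g : Matrix n n α) i j'‖₊)
    (Finset.mem_univ i))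
  rw [← Matrix.linfty_opNNNorm_def] at this
  exact_mod_cast this

theorem coe_e12_zpow (k : ℤ) :
    ((e12 ^ k : SL3) : Matrix (Fin 3) (Fin 3) ℤ) = !![1, k, 0; 0, 1, 0; 0, 0, 1] := by
  have he12 : (e12 : Matrix (Fin 3) (Fin 3) ℤ) = !![1, 1, 0; 0, 1, 0; 0, 0, 1] := rfl
  have he12_inv : ((e12⁻¹ : SL3) : Matrix (Fin 3) (Fin 3) ℤ) = !![1, -1, 0; 0, 1, 0; 0, 0, 1] := by
    rw [Matrix.SpecialLinearGroup.coe_inv, Matrix.adjugate_fin_three]; rfl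
  induction k using Int.induction_on with
  | zero => rw [zpow_zero, Matrix.SpecialLinearGroup.coe_one, Matrix.one_fin_three]
  | succ k ih =>
    rw [zpow_add_one, Matrix.SpecialLinearGroup.coe_mul, ih, he12, Matrix.mul_fin_three]
    ring_nf
  | pred k ih =>
    rw [zpow_sub_one, Matrix.SpecialLinearGroup.coe_mul, ih, he12_inv, Matrix.mul_fin_three]
    ring_nf

def catMap : SL3 :=
  ⟨!![2, 1, 0; 1, 1, 0; 0, 0, 1], by rw [Matrix.det_fin_three]; rfl⟩

theorem exists_coe_catMap_pow_succ (m : ℕ) : ∃ q r : ℤ,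
    ((catMap ^ (m + 1) : SL3) : Matrix (Fin 3) (Fin 3) ℤ) = !![q + r, q, 0; q, r, 0; 0, 0, 1] ∧
      r ≤ q ∧ 2 ^ m ≤ r := by
  induction m with
  | zero => exact ⟨1, 1, by rw [pow_one]; rfl, le_rfl, by simp⟩
  | succ m ih =>
    obtain ⟨q, r, hqr, hrq, hr⟩ := ih
    have hr0 : 0 ≤ r := le_trans (by positivity) hr
    refine ⟨2 * q + r, q + r, ?_, by linarith, by rw [pow_succ]; linarith⟩
    rw [pow_succ, Matrix.SpecialLinearGroup.coe_mul, hqr]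
    change _ * !![2, 1, 0; 1, 1, 0; 0, 0, 1] = _
    rw [Matrix.mul_fin_three]
    ring_nf

theorem conj_e12_zpow_apply_zero_one {x : SL3} {q r : ℤ}
    (hx : (x : Matrix (Fin 3) (Fin 3) ℤ) = !![q + r, q, 0; q, r, 0; 0, 0, 1]) (k : ℤ) :
    ((x⁻¹ * e12 ^ k * x : SL3) : Matrix (Fin 3) (Fin 3) ℤ) 0 1 = k * r ^ 2 := by
  rw [Matrix.SpecialLinearGroup.coe_mul, Matrix.SpecialLinearGroup.coe_mul,
    Matrix.SpecialLinearGroup.coe_inv, hx, coe_e12_zpow, Matrix.adjugate_fin_three,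
    Matrix.mul_fin_three, Matrix.mul_fin_three]
  simp only [Matrix.of_apply, Matrix.cons_val_zero, Matrix.cons_val_one, Matrix.cons_val_two,
    Matrix.tail_cons, Matrix.head_cons]
  ring

theorem exists_le_mul_wordLength_conj_catMap_pow {S : Set SL3} (hSfin : S.Finite)
    (hS : Subgroup.closure S = ⊤) : ∃ N : ℕ, ∀ (m : ℕ) (k : ℤ), k ≠ 0 →
      m ≤ N * wordLength S ((catMap ^ (m + 1))⁻¹ * e12 ^ k * catMap ^ (m + 1)) := by
  obtain ⟨N, hN⟩ := Matrix.SpecialLinearGroup.exists_norm_apply_le_two_pow_mul_wordLength hSfin hS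
  refine ⟨N, fun m k hk => ?_⟩
  obtain ⟨q, r, hx, -, hr⟩ := exists_coe_catMap_pow_succ m
  have hr1 : 1 ≤ r := le_trans (one_le_pow₀ one_le_two) hr
  have hentry : (2 : ℤ) ^ m ≤ |k * r ^ 2| := by
    rw [abs_mul, abs_of_pos (by positivity : 0 < r ^ 2)]
    nlinarith [Int.one_le_abs hk]
  rw [← conj_e12_zpow_apply_zero_one hx k] at hentry
  have := (Int.cast_le (R := ℝ)).mpr hentry
  push_cast at this
  exact (pow_le_pow_iff_right₀ one_lt_two).mp (this.trans (hN _ 0 1))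

theorem exists_not_tendsto_wordLength_conj_e12_zpow {S : Set SL3} (hSfin : S.Finite)
    (hS : Subgroup.closure S = ⊤) (ω : Ultrafilter ℕ) {d : ℕ → ℝ} (hd_pos : ∀ n, 0 < d n)
    (hd_mono : Monotone d) {k : ℤ} (hk : k ≠ 0) :
    ∃ x : ℕ → SL3, (∃ B : ℝ, ∀ n, (wordLength S (x n) : ℝ) / d n ≤ B) ∧
      ¬ Tendsto (fun n => (wordLength S ((x n)⁻¹ * e12 ^ k * x n) : ℝ) / d n)
        (ω : Filter ℕ) (nhds 0) := by
  obtain ⟨N, hN⟩ := exists_le_mul_wordLength_conj_catMap_pow hSfin hS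
  refine ⟨fun n => catMap ^ (⌈d n⌉₊ + 1),
    ⟨wordLength S catMap + 2 * wordLength S catMap / d 0, fun n => ?_⟩, fun hT => ?_⟩
  · have hceil : (⌈d n⌉₊ : ℝ) < d n + 1 := Nat.ceil_lt_add_one (hd_pos n).le
    have hlen : (wordLength S (catMap ^ (⌈d n⌉₊ + 1)) : ℝ) ≤ (d n + 2) * wordLength S catMap :=
      calc (wordLength S (catMap ^ (⌈d n⌉₊ + 1)) : ℝ)
          ≤ ((⌈d n⌉₊ + 1 : ℕ) : ℝ) * wordLength S catMap := by
            exact_mod_cast wordLength_pow_le hS catMap _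
        _ ≤ (d n + 2) * wordLength S catMap :=
            mul_le_mul_of_nonneg_right (by push_cast; linarith) (Nat.cast_nonneg _)
    calc (wordLength S (catMap ^ (⌈d n⌉₊ + 1)) : ℝ) / d n
        ≤ (d n + 2) * wordLength S catMap / d n := div_le_div_of_nonneg_right hlen (hd_pos n).le
      _ = wordLength S catMap + 2 * wordLength S catMap / d n := by
          rw [add_mul, add_div, mul_div_cancel_left₀ _ (hd_pos n).ne']
      _ ≤ wordLength S catMap + 2 * wordLength S catMap / d 0 := by
          gcongr; exacts [hd_pos 0, hd_mono (Nat.zero_le n)]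
  · have hlow : ∀ n, 1 / (N + 1 : ℝ) ≤
        (wordLength S ((catMap ^ (⌈d n⌉₊ + 1))⁻¹ * e12 ^ k * catMap ^ (⌈d n⌉₊ + 1)) : ℝ) /
          d n := by
      intro n
      have h := (hN ⌈d n⌉₊ k hk).trans (Nat.mul_le_mul_right _ N.le_succ)
      rw [div_le_div_iff₀ (by positivity) (hd_pos n), one_mul, mul_comm]
      exact (Nat.le_ceil _).trans (by exact_mod_cast h)
    obtain ⟨n, hn⟩ := (hT.eventually (gt_mem_nhds (by positivity : (0 : ℝ) < 1 / (N + 1)))).exists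
    exact (hlow n).not_gt hn

theorem e12_zpow_not_inConeKernel_general
    (S : Set SL3) (hSfin : S.Finite) (hSgen : Subgroup.closure S = ⊤)
    (ω : Ultrafilter ℕ)
    (d : ℕ → ℝ) (hd_pos : ∀ n, 0 < d n) (hd_mono : Monotone d) :
    (∀ k : ℤ, k ≠ 0 →
      ∃ x : ℕ → SL3,
        (∃ B : ℝ, ∀ n, (wordLength S (x n) : ℝ) / d n ≤ B) ∧
        ¬ Tendsto (fun n => (wordLength S ((x n)⁻¹ * e12 ^ k * x n) : ℝ) / d n)
            (ω : Filter ℕ) (nhds 0)) ∧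
    (∀ H : Subgroup SL3, (H : Set SL3) = {g | inConeKernel S ω d g} → ¬ H.FiniteIndex) := by
  have hconj {k : ℤ} (hk : k ≠ 0) :=
    exists_not_tendsto_wordLength_conj_e12_zpow hSfin hSgen ω hd_pos hd_mono hk
  refine ⟨fun k hk => hconj hk, fun H hH hfin => ?_⟩
  obtain ⟨t, ht, -, htH⟩ := Subgroup.exists_pow_mem_of_index_ne_zero hfin.index_ne_zero e12
  obtain ⟨x, hx, hnot⟩ := hconj (k := t) (by exact_mod_cast ht.ne')
  have hker : e12 ^ (t : ℤ) ∈ (H : Set SL3) := by rw [zpow_natCast]; exact htH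
  rw [hH] at hker
  exact hnot (hker x hx)

/-- For every nonzero integer `k`, the element `e₁₂^k` does not lie in the kernel of the
natural action of `SL(3,ℤ)` on any asymptotic cone; in particular this kernel is not a
finite-index subgroup of `SL(3,ℤ)`. -/
theorem e12_zpow_not_inConeKernel
    (S : Set SL3) (hSfin : S.Finite) (hSgen : Subgroup.closure S = ⊤)
    (ω : Ultrafilter ℕ) (hω : ∀ A ∈ ω, A.Infinite)
    (d : ℕ → ℝ) (hd_pos : ∀ n, 0 < d n) (hd_mono : Monotone d)
    (hd_unbdd : ∀ B : ℝ, ∃ n, B < d n) :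
    (∀ k : ℤ, k ≠ 0 →
      ∃ x : ℕ → SL3,
        (∃ B : ℝ, ∀ n, (wordLength S (x n) : ℝ) / d n ≤ B) ∧
        ¬ Tendsto (fun n => (wordLength S ((x n)⁻¹ * e12 ^ k * x n) : ℝ) / d n)
            (ω : Filter ℕ) (nhds 0)) ∧
    (∀ H : Subgroup SL3, (H : Set SL3) = {g | inConeKernel S ω d g} → ¬ H.FiniteIndex) :=
  e12_zpow_not_inConeKernel_general S hSfin hSgen ω d hd_pos hd_mono
end
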